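/- Let λ ≥ 1, and let Y have density f(y) = e^{-(1/2)|y|^λ}/(2^{1+1/λ}Γ(1+1/λ)). Let d_θ₁(y) = -λ|y|^λ sign(y) and d_μ(y) = (λ/2)|y|^{λ-1} sign(y). Then E[d_θ₁(Y)·d_μ(Y)] = -2^{1-1/λ}·λ / Γ(1+1/λ). -/

import Mathlib

open MeasureTheory Real

/-- The standardized exponential power density (APD with `θ₁ = 1/2`, `θ₂ = l`). -/
noncomputable def epdDensity (l y : ℝ) : ℝ :=
  Real.exp (-(1 / 2) * |y| ^ l) / ((2 : ℝ) ^ (1 + 1 / l) * Real.Gamma (1 + 1 / l))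

/-- The digamma function `ψ(x) = (log ∘ Γ)'(x)`. -/
noncomputable def digamma (x : ℝ) : ℝ :=
  deriv (fun y : ℝ => Real.log (Real.Gamma y)) x

/-- The trigamma function `ψ'`. -/
noncomputable def trigamma (x : ℝ) : ℝ :=
  deriv digamma x

/-- The score component `d_{θ₁}`. -/
noncomputable def dTheta1 (l y : ℝ) : ℝ :=
  -l * |y| ^ l * Real.sign y

/-- The score component `d_μ`. -/
noncomputable def dMu (l y : ℝ) : ℝ :=
  (l / 2) * |y| ^ (l - 1) * Real.sign y

/-! The product `d_θ₁ d_μ` is, away from `0`, the even function `-(λ²/2) |y|^(2λ-1)`, so the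
expectation reduces to twice a Gamma integral over `(0, ∞)`:
`∫₀^∞ x^(2λ-1) e^(-x^λ/2) dx = Γ(2) 2² / λ = 4 / λ`, and `4 = 2^(1-1/λ) 2^(1+1/λ)`. -/

theorem Real.sign_mul_self_of_ne_zero {r : ℝ} (hr : r ≠ 0) : sign r * sign r = 1 :=
  mul_self_eq_one_iff.mpr (sign_apply_eq_of_ne_zero r hr).symm

theorem dTheta1_mul_dMu_of_ne_zero (l : ℝ) {y : ℝ} (hy : y ≠ 0) :
    dTheta1 l y * dMu l y = -(l ^ 2 / 2) * |y| ^ (2 * l - 1) := by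
  have hpow : |y| ^ l * |y| ^ (l - 1) = |y| ^ (2 * l - 1) := by
    rw [← rpow_add (abs_pos.mpr hy)]
    ring_nf
  rw [dTheta1, dMu, ← hpow]
  linear_combination (-(l ^ 2 / 2) * (|y| ^ l * |y| ^ (l - 1))) * sign_mul_self_of_ne_zero hy

theorem integral_abs_rpow_mul_exp_neg_mul_abs_rpow {p q b : ℝ} (hp : 0 < p) (hq : -1 < q)
    (hb : 0 < b) :
    ∫ y : ℝ, |y| ^ q * exp (-b * |y| ^ p) =
      2 * (b ^ (-(q + 1) / p) * (1 / p) * Gamma ((q + 1) / p)) := by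
  rw [integral_comp_abs (f := fun x => x ^ q * exp (-b * x ^ p)),
    integral_rpow_mul_exp_neg_mul_rpow hp hq hb]

theorem integral_abs_rpow_two_mul_sub_one_mul_exp {l : ℝ} (hl : 0 < l) :
    ∫ y : ℝ, |y| ^ (2 * l - 1) * exp (-(1 / 2) * |y| ^ l) = 8 / l := by
  have hexp : (2 * l - 1 + 1) / l = 2 := by field_simp; ring
  have hneg : -(2 * l - 1 + 1) / l = -2 := by rw [neg_div, hexp]
  rw [integral_abs_rpow_mul_exp_neg_mul_abs_rpow hl (by linarith) one_half_pos, hexp, hneg,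
    Gamma_two, show (-2 : ℝ) = ((-2 : ℤ) : ℝ) by norm_num, rpow_intCast]
  field_simp
  norm_num

theorem dTheta1_dMu_covariance (l : ℝ) (hl : 1 ≤ l) :
    ∫ y : ℝ, dTheta1 l y * dMu l y * epdDensity l y
      = -(2 : ℝ) ^ (1 - 1 / l) * l / Real.Gamma (1 + 1 / l) := by
  have hl0 : 0 < l := one_pos.trans_le hl
  have hintegrand : (fun y => dTheta1 l y * dMu l y * epdDensity l y) =ᵐ[volume]
      fun y => -(l ^ 2 / 2) / ((2 : ℝ) ^ (1 + 1 / l) * Gamma (1 + 1 / l)) *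
        (|y| ^ (2 * l - 1) * exp (-(1 / 2) * |y| ^ l)) := by
    filter_upwards [Measure.ae_ne volume 0] with y hy
    rw [dTheta1_mul_dMu_of_ne_zero l hy, epdDensity]
    ring
  have hfour : (2 : ℝ) ^ (1 - 1 / l) = 4 / 2 ^ (1 + 1 / l) := by
    rw [eq_div_iff (by positivity), ← rpow_add two_pos,
      show 1 - 1 / l + (1 + 1 / l) = (2 : ℕ) by ring, rpow_natCast]
    norm_num
  rw [integral_congr_ae hintegrand, integral_const_mul,
    integral_abs_rpow_two_mul_sub_one_mul_exp hl0, hfour]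
  field_simp
  ring
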